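/- Let k >= 1 and let G be a C_{2k+1}-critical graph. If {s, t} is a vertex cut of G and H is a connected component of G - {s,t}, then the 2-terminal graph (G[V(H) ∪ {s,t}], s, t) is restricted, i.e., its forced set with respect to C_{2k+1} is a proper subset of Z_{2k+1}. -/

import Mathlib

/-!
Suppose every target value at `t` were attainable. Since `C` is a nonempty component of
`G - {s, t}`, the graph `G - C` is a proper subgraph and so, by criticality, maps to the cycle;
rotating, it sends `s` to `0` and `t` to some `x`. A homomorphism of `G[C ∪ {s, t}]` realising
`(0, x)` on the terminals then agrees with it on `{s, t}`, and since no edge joins `C` to `G - C`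
outside `{s, t}`, the two maps glue to a homomorphism of `G` itself, which is impossible.
-/

/-- The cycle `C_n` on vertex set `ZMod n`: `u ~ v` iff `u ≠ v` and `u - v = ±1`. -/
def cycleGraph (n : ℕ) : SimpleGraph (ZMod n) :=
  SimpleGraph.fromRel (fun u v => u - v = 1)

/-- The forced set of a 2-terminal graph `(G, s, t)` with respect to `C_n`. -/
def forcedSet (n : ℕ) {V : Type*} (G : SimpleGraph V) (s t : V) : Set (ZMod n) :=
  {x | ∃ φ : G →g cycleGraph n, φ s = 0 ∧ φ t = x}

/-- `G` is `C_n`-critical: `G` has no homomorphism to `C_n`, but every proper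
subgraph of `G` does. -/
def IsCnCritical (n : ℕ) {V : Type*} (G : SimpleGraph V) : Prop :=
  ¬ Nonempty (G →g cycleGraph n) ∧
  ∀ H : G.Subgraph, H ≠ ⊤ → Nonempty (H.coe →g cycleGraph n)

namespace cycleGraph

def addRight (n : ℕ) (a : ZMod n) : cycleGraph n →g cycleGraph n where
  toFun x := x + a
  map_rel' {u v} h := by
    simpa [cycleGraph, SimpleGraph.fromRel_adj, add_sub_add_right_eq_sub] using h

theorem exists_hom_map_eq_zero {V : Type*} {G : SimpleGraph V} {n : ℕ}
    (φ : G →g cycleGraph n) (s : V) : ∃ ψ : G →g cycleGraph n, ψ s = 0 :=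
  ⟨(addRight n (-φ s)).comp φ, add_neg_cancel (φ s)⟩

end cycleGraph

namespace SimpleGraph

variable {V W : Type*} {G : SimpleGraph V} {H : SimpleGraph W}

theorem nonempty_induce_hom_of_subgraph_hom
    (hsub : ∀ G' : G.Subgraph, G' ≠ ⊤ → Nonempty (G'.coe →g H)) {S : Set V} (hS : S ≠ Set.univ) : Nonempty (G.induce S →g H) := by
  obtain ⟨φ⟩ := hsub ((⊤ : G.Subgraph).induce S) fun h => hS (congrArg Subgraph.verts h)
  exact ⟨⟨fun v => φ v, fun {u v} huv => φ.map_rel ⟨u.2, v.2, huv⟩⟩⟩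

theorem nonempty_hom_of_induce_cover {A B : Set V} (hcover : ∀ v, v ∈ A ∨ v ∈ B)
    (hedge : ∀ ⦃u v⦄, G.Adj u v → u ∈ A ∧ v ∈ A ∨ u ∈ B ∧ v ∈ B)
    (f : G.induce A →g H) (g : G.induce B →g H)
    (hfg : ∀ v (ha : v ∈ A) (hb : v ∈ B), f ⟨v, ha⟩ = g ⟨v, hb⟩) : Nonempty (G →g H) := by
  classical
  let Φ : V → W := fun v =>
    if h : v ∈ A then f ⟨v, h⟩ else g ⟨v, (hcover v).resolve_left h⟩
  have hΦA : ∀ v (h : v ∈ A), Φ v = f ⟨v, h⟩ := fun v h => dif_pos h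
  have hΦB : ∀ v (h : v ∈ B), Φ v = g ⟨v, h⟩ := fun v h => by
    by_cases hA : v ∈ A
    · rw [hΦA v hA, hfg v hA h]
    · exact dif_neg hA
  refine ⟨⟨Φ, fun {u v} huv => ?_⟩⟩
  rcases hedge huv with ⟨hu, hv⟩ | ⟨hu, hv⟩
  · rw [hΦA u hu, hΦA v hv]
    exact f.map_rel (show (G.induce A).Adj ⟨u, hu⟩ ⟨v, hv⟩ from huv)
  · rw [hΦB u hu, hΦB v hv]
    exact g.map_rel (show (G.induce B).Adj ⟨u, hu⟩ ⟨v, hv⟩ from huv)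

theorem mem_image_supp_of_adj {S : Set V} {K : (G.induce Sᶜ).ConnectedComponent} {u v : V}
    (hu : u ∈ Subtype.val '' K.supp) (huv : G.Adj u v) (hv : v ∉ S) :
    v ∈ Subtype.val '' K.supp := by
  obtain ⟨u, huK, rfl⟩ := hu
  refine ⟨⟨v, hv⟩, ?_, rfl⟩
  rw [ConnectedComponent.mem_supp_iff] at huK ⊢
  rw [← huK]
  exact ConnectedComponent.connectedComponentMk_eq_of_adj
    (show (G.induce Sᶜ).Adj ⟨v, hv⟩ u from huv.symm)

end SimpleGraph

/-- Let `k ≥ 1`, `G` be `C_{2k+1}`-critical, `{s,t}` a vertex cut of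
`G`, and `C` the vertex set of a connected component of `G - {s,t}`.  Then the
2-terminal graph `(G[C ∪ {s,t}], s, t)` is restricted: its forced set with respect
to `C_{2k+1}` is a proper subset of `Z_{2k+1}`. -/
theorem stmt_10 (k : ℕ) {V : Type*} (G : SimpleGraph V)
    (hG : IsCnCritical (2 * k + 1) G) (s t : V)
    (C : Set V)
    (hC : ∃ K : (SimpleGraph.induce ({s, t}ᶜ : Set V) G).ConnectedComponent,
      C = Subtype.val ''
        {v | (SimpleGraph.induce ({s, t}ᶜ : Set V) G).connectedComponentMk v = K}) :
    forcedSet (2 * k + 1) (SimpleGraph.induce (C ∪ {s, t}) G)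
        ⟨s, Set.mem_union_right _ (by simp)⟩ ⟨t, Set.mem_union_right _ (by simp)⟩
      ≠ Set.univ := by
  intro huniv
  obtain ⟨hno, hcrit⟩ := hG
  obtain ⟨K, hCK⟩ := hC
  have hC_terminals : ∀ v ∈ ({s, t} : Set V), v ∉ C := by
    rintro v hv hvC
    obtain ⟨w, -, rfl⟩ := hCK ▸ hvC
    exact w.2 hv
  have hC_edge : ∀ ⦃u v⦄, u ∈ C → G.Adj u v → v ∈ C ∪ {s, t} := fun u v hu huv => by
    by_contra hv
    rw [Set.mem_union, not_or] at hv
    exact hv.1 (hCK ▸ SimpleGraph.mem_image_supp_of_adj (hCK ▸ hu) huv hv.2)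
  have hC_proper : Cᶜ ≠ Set.univ := by
    obtain ⟨v₀, hv₀⟩ := K.nonempty_supp
    exact Set.compl_ne_univ.mpr ⟨v₀, hCK ▸ ⟨v₀, hv₀, rfl⟩⟩
  obtain ⟨φ₀⟩ := SimpleGraph.nonempty_induce_hom_of_subgraph_hom hcrit hC_proper
  obtain ⟨φ, hφs⟩ := cycleGraph.exists_hom_map_eq_zero φ₀ ⟨s, hC_terminals s (by simp)⟩
  obtain ⟨ψ, hψs, hψt⟩ : φ ⟨t, hC_terminals t (by simp)⟩ ∈ forcedSet (2 * k + 1)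
      (G.induce (C ∪ {s, t})) ⟨s, Set.mem_union_right _ (by simp)⟩
      ⟨t, Set.mem_union_right _ (by simp)⟩ := huniv ▸ Set.mem_univ _
  refine hno (SimpleGraph.nonempty_hom_of_induce_cover (fun v => (em (v ∈ C)).imp Or.inl id)
    (fun u v huv => ?_) ψ φ ?_)
  · by_cases hu : u ∈ C
    · exact .inl ⟨.inl hu, hC_edge hu huv⟩
    by_cases hv : v ∈ C
    · exact .inl ⟨hC_edge hv huv.symm, .inl hv⟩
    exact .inr ⟨hu, hv⟩
  · rintro v (hv | rfl | rfl) hv'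
    · exact absurd hv hv'
    · exact hψs.trans hφs.symm
    · exact hψt
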